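/- arXiv:2505.08560 — 4 statements merged into one kernel-verified Lean document; each statement's English description precedes it below -/
import Mathlib

section
/- Fix an integer n ≥ 2. For every ε > 0, there is no constant C > 0 such that F(a) ≤ C·(a1·an)^(1-ε) holds for all vectors a = (a1,...,an) of positive integers with gcd(a1,...,an) = 1 and a1 ≤ a2 ≤ ... ≤ an. -/
/-!
The vector `(k, k+1, …, k+1)` generates the same numerical semigroup as the pair `{k, k+1}`,
so its Frobenius number is `k(k+1) - k - (k+1)`, which grows like `a₁aₙ = k(k+1)`. A bound
`C (a₁aₙ)^(1-ε)` is `o(a₁aₙ)`, so it fails for large `k`.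
-/

open Filter

theorem exists_sum_mul_eq_iff_mem_closure_range {ι : Type*} [Fintype ι] (a : ι → ℕ)
    (b : ℕ) :
    (∃ z : ι → ℕ, b = ∑ i, a i * z i) ↔ b ∈ AddSubmonoid.closure (Set.range a) := by
  simp only [AddSubmonoid.mem_closure_range_iff_of_fintype, smul_eq_mul, mul_comm]

theorem frobeniusNumber_range_iff_isGreatest {ι : Type*} [Fintype ι] (a : ι → ℕ) (F : ℕ) :
    FrobeniusNumber F (Set.range a) ↔
      IsGreatest {b : ℕ | ¬ ∃ z : ι → ℕ, b = ∑ i, a i * z i} F := by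
  simp only [FrobeniusNumber, exists_sum_mul_eq_iff_mem_closure_range]

theorem Finset.gcd_eq_one_of_coprime {ι : Type*} {s : Finset ι} {a : ι → ℕ} {i j : ι}
    (hi : i ∈ s) (hj : j ∈ s) (h : Nat.Coprime (a i) (a j)) : s.gcd a = 1 :=
  Nat.eq_one_of_dvd_coprimes h (Finset.gcd_dvd hi) (Finset.gcd_dvd hj)

theorem Fin.range_cons_const {α : Type*} {n : ℕ} (x y : α) :
    Set.range (Fin.cons x fun _ : Fin (n + 1) => y) = {x, y} := by
  rw [Fin.range_cons, Set.range_const]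

theorem Fin.monotone_cons_const {α : Type*} [Preorder α] {n : ℕ} {x y : α} (h : x ≤ y) :
    Monotone (Fin.cons x fun _ : Fin n => y) := by
  intro i j hij
  cases i using Fin.cases with
  | zero => cases j using Fin.cases <;> simp [h]
  | succ i =>
    obtain ⟨j, rfl⟩ := Fin.exists_succ_eq.2 (ne_bot_of_gt (Fin.succ_pos i |>.trans_le hij))
    simp

theorem eventually_mul_rpow_one_sub_le {C c ε : ℝ} (hc : 0 < c) (hε : 0 < ε) :
    ∀ᶠ x : ℝ in atTop, C * x ^ (1 - ε) ≤ c * x := by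
  filter_upwards [(tendsto_rpow_atTop hε).eventually_ge_atTop (C / c), eventually_gt_atTop 0]
    with x hx hx0
  have hxε : 0 < x ^ ε := Real.rpow_pos_of_pos hx0 ε
  rw [Real.rpow_sub hx0, Real.rpow_one, mul_div_assoc', div_le_iff₀ hxε]
  rw [div_le_iff₀ hc] at hx
  nlinarith

/-- For fixed `n ≥ 2` and any `ε > 0`, there is no constant `C > 0` such that
`F(a) ≤ C·(a1·an)^(1-ε)` for all positive integral vectors `a1 ≤ ⋯ ≤ an` with gcd 1. -/
theorem no_subquadratic_bound (n : ℕ) (hn : 2 ≤ n) (ε : ℝ) (hε : 0 < ε) :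
    ¬ ∃ C : ℝ, 0 < C ∧
      ∀ a : Fin n → ℕ, (∀ i, 0 < a i) → Monotone a → Finset.univ.gcd a = 1 →
        ∀ F : ℕ, IsGreatest {b : ℕ | ¬ ∃ z : Fin n → ℕ, b = ∑ i, a i * z i} F →
          (F : ℝ) ≤ C * ((a ⟨0, by omega⟩ : ℝ) * (a ⟨n - 1, by omega⟩ : ℝ)) ^ ((1 : ℝ) - ε) := by
  obtain ⟨m, rfl⟩ : ∃ m, n = m + 2 := ⟨n - 2, by omega⟩
  rintro ⟨C, -, hbound⟩
  have hquad : Tendsto (fun k : ℕ => (k : ℝ) * (k + 1)) atTop atTop :=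
    tendsto_natCast_atTop_atTop.atTop_mul_atTop₀
      (tendsto_atTop_add_const_right _ 1 tendsto_natCast_atTop_atTop)
  obtain ⟨k, hk, hCk⟩ : ∃ k : ℕ, 4 ≤ k ∧
      C * ((k : ℝ) * (k + 1)) ^ (1 - ε) ≤ 1 / 2 * ((k : ℝ) * (k + 1)) :=
    ((eventually_ge_atTop 4).and
      (hquad.eventually (eventually_mul_rpow_one_sub_le one_half_pos hε))).exists
  set a : Fin (m + 2) → ℕ := Fin.cons k fun _ => k + 1
  have hF : FrobeniusNumber (k * (k + 1) - k - (k + 1)) (Set.range a) :=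
    Fin.range_cons_const k (k + 1) ▸ frobeniusNumber_pair (by simp) (by omega) (by omega)
  have hle := hbound a (fun i => by cases i using Fin.cases <;> simp [a]; omega)
    (Fin.monotone_cons_const k.le_succ)
    (Finset.gcd_eq_one_of_coprime (Finset.mem_univ 0) (Finset.mem_univ 1) (by simp [a])) _
    ((frobeniusNumber_range_iff_isGreatest a _).1 hF)
  have hsum : k + (k + 1) ≤ k * (k + 1) := by nlinarith
  change _ ≤ C * ((k : ℝ) * (k + 1 : ℕ)) ^ _ at hle
  push_cast [Nat.sub_sub, Nat.cast_sub hsum] at hle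
  have hkR : (4 : ℝ) ≤ k := by exact_mod_cast hk
  nlinarith
end

section
/- The vector a = (8, 32, 59) satisfies gcd(8,32,59) = 1 and violates Selmer's bound: F(8,32,59) = 405 > 2·59·⌊8/3⌋ − 8 = 228. Hence Selmer's upper bound F(a) ≤ 2·an·⌊a1/n⌋ − a1 fails in general under the condition gcd(a1,...,an) = 1 alone. -/
/-!
Since `8 ∣ 32`, the generator `32` is redundant: `(8, 32, 59)` represents exactly the numbers
that `(8, 59)` represents. For two coprime generators `m, n > 1` the Frobenius number is
`m * n - m - n` (the Chicken McNugget theorem), here `8 * 59 - 8 - 59 = 405`.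
-/

namespace Nat

lemma mem_closure_pair_iff {m n k : ℕ} :
    k ∈ AddSubmonoid.closure {m, n} ↔ ∃ x z : ℕ, k = m * x + n * z := by
  simp only [AddSubmonoid.mem_closure_pair, smul_eq_mul, eq_comm, mul_comm]

lemma exists_eq_add_add_iff_of_dvd {a b c k : ℕ} (hab : a ∣ b) :
    (∃ x y z : ℕ, k = a * x + b * y + c * z) ↔ ∃ x z : ℕ, k = a * x + c * z := by
  obtain ⟨d, rfl⟩ := hab
  constructor
  · rintro ⟨x, y, z, rfl⟩
    exact ⟨x + d * y, z, by ring⟩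
  · rintro ⟨x, z, rfl⟩
    exact ⟨x, 0, z, by ring⟩

theorem isGreatest_not_representable_triple_of_dvd {a b c : ℕ} (hab : a ∣ b)
    (hac : Coprime a c) (ha : 1 < a) (hc : 1 < c) :
    IsGreatest {k : ℕ | ¬ ∃ x y z : ℕ, k = a * x + b * y + c * z} (a * c - a - c) := by
  have hset : {k : ℕ | ¬ ∃ x y z : ℕ, k = a * x + b * y + c * z} =
      {k | k ∉ AddSubmonoid.closure {a, c}} := by
    ext k
    simp only [Set.mem_ofPred_eq, exists_eq_add_add_iff_of_dvd hab, mem_closure_pair_iff]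
  rw [hset]
  exact frobeniusNumber_pair hac ha hc

end Nat

/-- The vector `(8, 32, 59)` has gcd 1, Frobenius number `405`, and violates Selmer's bound
`2·an·⌊a1/n⌋ − a1 = 228`. -/
theorem selmer_bound_fails :
    Nat.gcd 8 (Nat.gcd 32 59) = 1 ∧
      IsGreatest {b : ℕ | ¬ ∃ x y z : ℕ, b = 8 * x + 32 * y + 59 * z} 405 ∧
      405 > 2 * 59 * (8 / 3) - 8 :=
  ⟨by norm_num,
    Nat.isGreatest_not_representable_triple_of_dvd (by norm_num) (by norm_num) (by norm_num)
      (by norm_num),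
    by norm_num⟩
end

section
/- For positive integers a1 ≤ a2 ≤ ... ≤ an (n ≥ 2) with gcd 1, Schur's bound holds: F(a) ≤ (a1 − 1)(an − 1) − 1. -/
/-!
Let `m = a₁`. The residues mod `m` that are sums of at most `k` of the `aᵢ` form a chain of sets
that grows strictly until it stabilises, and since the `aᵢ` generate `ℤ/m` (gcd 1) it can only
stabilise at all of `ℤ/m`; so every residue is a sum of at most `m - 1` of the `aᵢ`. Such a sum `t`
in the class of `F` satisfies `t ≤ aₙ (m - 1)`, and as `t + mℕ` is representable but `F` is not,
`F ≤ t - m ≤ aₙ (m - 1) - m = (a₁ - 1)(aₙ - 1) - 1`.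
-/

open Finset Set

section BoundedSums

variable {G ι : Type*} [AddCommMonoid G] [Fintype ι] (s : ι → G)

def boundedSums (k : ℕ) : Set G :=
  {x | ∃ z : ι → ℕ, ∑ i, z i ≤ k ∧ ∑ i, z i • s i = x}

theorem zero_mem_boundedSums (k : ℕ) : 0 ∈ boundedSums s k :=
  ⟨0, by simp, by simp⟩

theorem boundedSums_mono : Monotone (boundedSums s) :=
  fun _ _ hkl _ ⟨z, hz, hx⟩ => ⟨z, hz.trans hkl, hx⟩

variable {s}

theorem add_mem_boundedSums_succ [DecidableEq ι] {k : ℕ} {x : G} (hx : x ∈ boundedSums s k)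
    (i : ι) : x + s i ∈ boundedSums s (k + 1) := by
  obtain ⟨z, hz, rfl⟩ := hx
  refine ⟨z + Pi.single i 1, ?_, ?_⟩
  · simp only [Pi.add_apply, sum_add_distrib, sum_pi_single', Finset.mem_univ, if_true]
    omega
  · simp only [Pi.add_apply, add_smul, sum_add_distrib, Pi.single_apply, ite_smul, one_smul,
      zero_smul, sum_ite_eq', Finset.mem_univ, if_true]

theorem boundedSums_eq_univ_of_succ_subset (hs : AddSubmonoid.closure (range s) = ⊤) {k : ℕ}
    (hk : boundedSums s (k + 1) ⊆ boundedSums s k) : boundedSums s k = univ := by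
  classical
  refine eq_univ_of_forall fun x => ?_
  have hx : x ∈ AddSubmonoid.closure (range s) := hs ▸ AddSubmonoid.mem_top x
  induction hx using AddSubmonoid.closure_induction_left with
  | zero => exact zero_mem_boundedSums s k
  | add_left y hy x _ ih =>
    obtain ⟨i, rfl⟩ := hy
    rw [add_comm]
    exact hk (add_mem_boundedSums_succ ih i)

theorem boundedSums_eq_univ_or_le_ncard (hs : AddSubmonoid.closure (range s) = ⊤) [Finite G]
    (k : ℕ) : boundedSums s k = univ ∨ k + 1 ≤ (boundedSums s k).ncard := by
  induction k with
  | zero => exact .inr ((ncard_pos).mpr ⟨0, zero_mem_boundedSums s 0⟩)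
  | succ k ih =>
    by_cases hk : boundedSums s (k + 1) ⊆ boundedSums s k
    · exact .inl (univ_subset_iff.mp (boundedSums_eq_univ_of_succ_subset hs hk ▸
        boundedSums_mono s k.le_succ))
    · rcases ih with ih | ih
      · exact absurd (ih ▸ subset_univ _) hk
      · exact .inr (ih.trans_lt (ncard_lt_ncard ⟨boundedSums_mono s k.le_succ, hk⟩))

theorem boundedSums_card_sub_one [Finite G] (hs : AddSubmonoid.closure (range s) = ⊤) :
    boundedSums s (Nat.card G - 1) = univ := by
  by_contra hne
  have hcard := (boundedSums_eq_univ_or_le_ncard hs (Nat.card G - 1)).resolve_left hne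
  have := ncard_lt_card hne
  have : 0 < Nat.card G := Nat.card_pos
  omega

end BoundedSums

theorem Finset.natCast_gcd {ι : Type*} (s : Finset ι) (f : ι → ℕ) :
    ((s.gcd f : ℕ) : ℤ) = s.gcd fun i => (f i : ℤ) := by
  classical
  induction s using Finset.induction_on with
  | empty => simp
  | insert i s hi ih =>
    rw [gcd_insert, gcd_insert, ← ih, ← Int.coe_gcd, Int.gcd_natCast_natCast]
    rfl

theorem one_mem_addSubgroupClosure_range_natCast {ι R : Type*} [Fintype ι] [Ring R]
    {a : ι → ℕ} (ha : univ.gcd a = 1) :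
    (1 : R) ∈ AddSubgroup.closure (range fun i => (a i : R)) := by
  obtain ⟨g, hg⟩ := univ.gcd_eq_sum_mul fun i => (a i : ℤ)
  rw [← Finset.natCast_gcd, ha, Nat.cast_one] at hg
  have := congrArg (Int.cast : ℤ → R) hg
  push_cast at this
  rw [this]
  refine AddSubgroup.sum_mem _ fun i _ => ?_
  rw [← Int.cast_comm, ← zsmul_eq_mul]
  exact AddSubgroup.zsmul_mem _ (AddSubgroup.subset_closure (mem_range_self i)) _

theorem ZMod.addSubmonoidClosure_range_natCast_eq_top {ι : Type*} [Fintype ι] {m : ℕ} [NeZero m]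
    {a : ι → ℕ} (ha : univ.gcd a = 1) :
    AddSubmonoid.closure (range fun i => (a i : ZMod m)) = ⊤ := by
  rw [← AddSubgroup.closure_toAddSubmonoid_of_finite, eq_top_iff]
  rintro x -
  rw [← ZMod.natCast_zmod_val x, ← nsmul_one]
  exact AddSubgroup.nsmul_mem _ (one_mem_addSubgroupClosure_range_natCast ha) _

theorem Nat.add_le_of_modEq_of_not_exists {ι : Type*} [Fintype ι] {a : ι → ℕ} {b : ℕ}
    (hb : ¬ ∃ z : ι → ℕ, b = ∑ i, a i * z i) (z : ι → ℕ) (j : ι)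
    (h : b ≡ ∑ i, a i * z i [MOD a j]) : b + a j ≤ ∑ i, a i * z i := by
  classical
  by_cases hle : ∑ i, a i * z i ≤ b
  · obtain ⟨q, hq⟩ := (Nat.modEq_iff_dvd' hle).mp h.symm
    refine absurd ⟨z + Pi.single j q, ?_⟩ hb
    simp only [Pi.add_apply, mul_add, sum_add_distrib, Pi.single_apply, mul_ite, mul_zero,
      sum_ite_eq', Finset.mem_univ, if_true]
    omega
  · have hdvd := (Nat.modEq_iff_dvd' (not_le.mp hle).le).mp h
    have := Nat.le_of_dvd (by omega) hdvd
    omega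

theorem Nat.le_sub_one_mul_sub_one_sub_one {b m A : ℕ} (hA : 0 < A) (h : b + m ≤ A * (m - 1)) :
    b ≤ (m - 1) * (A - 1) - 1 := by
  obtain rfl | hm := m.eq_zero_or_pos
  · simp_all
  have : A * (m - 1) = (m - 1) * (A - 1) + (m - 1) := by
    rw [Nat.mul_sub_one (m - 1), Nat.sub_add_cancel (Nat.le_mul_of_pos_right _ hA), mul_comm]
  generalize (m - 1) * (A - 1) = p at *
  omega

theorem exists_sum_le_and_add_le_of_not_exists_sum {ι : Type*} [Fintype ι] {a : ι → ℕ}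
    (ha : univ.gcd a = 1) {b : ℕ} (hb : ¬ ∃ z : ι → ℕ, b = ∑ i, a i * z i) (j : ι) (hj : 0 < a j) :
    ∃ z : ι → ℕ, ∑ i, z i ≤ a j - 1 ∧ b + a j ≤ ∑ i, a i * z i := by
  have : NeZero (a j) := ⟨hj.ne'⟩
  have hall :=
    boundedSums_card_sub_one (ZMod.addSubmonoidClosure_range_natCast_eq_top (m := a j) ha)
  rw [Nat.card_zmod] at hall
  obtain ⟨z, hz, hzb⟩ : (b : ZMod (a j)) ∈ boundedSums _ (a j - 1) := hall ▸ Set.mem_univ _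
  refine ⟨z, hz, Nat.add_le_of_modEq_of_not_exists hb z j ?_⟩
  rw [← ZMod.natCast_eq_natCast_iff, ← hzb]
  push_cast
  simp only [nsmul_eq_mul, mul_comm]

/-- Schur's bound: for positive integers `a1 ≤ ⋯ ≤ an` (`n ≥ 2`) with gcd 1,
`F(a) ≤ (a1 − 1)(an − 1) − 1`. -/
theorem schur_bound (n : ℕ) (hn : 2 ≤ n) (a : Fin n → ℕ)
    (ha : ∀ i, 0 < a i) (hmono : Monotone a) (hgcd : Finset.univ.gcd a = 1)
    (F : ℕ) (hF : IsGreatest {b : ℕ | ¬ ∃ z : Fin n → ℕ, b = ∑ i, a i * z i} F) :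
    F ≤ (a ⟨0, by omega⟩ - 1) * (a ⟨n - 1, by omega⟩ - 1) - 1 := by
  obtain ⟨z, hz, hgap⟩ :=
    exists_sum_le_and_add_le_of_not_exists_sum hgcd hF.1 _ (ha ⟨0, by omega⟩)
  have hsum : ∑ i, a i * z i ≤ a ⟨n - 1, by omega⟩ * (a ⟨0, by omega⟩ - 1) := calc
    ∑ i, a i * z i ≤ ∑ i, a ⟨n - 1, by omega⟩ * z i := by
      gcongr with i
      exact hmono (Fin.mk_le_mk.mpr (by omega))
    _ = a ⟨n - 1, by omega⟩ * ∑ i, z i := (mul_sum _ _ _).symm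
    _ ≤ a ⟨n - 1, by omega⟩ * (a ⟨0, by omega⟩ - 1) := Nat.mul_le_mul_left _ hz
  exact Nat.le_sub_one_mul_sub_one_sub_one (ha _) (hgap.trans hsum)
end

section
/- The integer a1·a2 − a1 − a2 is not representable as a1·x + a2·y with nonnegative integers x, y, for coprime positive integers a1, a2 ≥ 2. -/
/-- Non-representability half of Sylvester's theorem: `a1·a2 − a1 − a2` is not a nonnegative
integral combination of coprime `a1, a2 ≥ 2`. -/
theorem not_representable_frobenius (a1 a2 : ℕ) (h1 : 2 ≤ a1) (h2 : 2 ≤ a2)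
    (hco : Nat.Coprime a1 a2) :
    ¬ ∃ x y : ℕ, a1 * a2 - a1 - a2 = a1 * x + a2 * y := by
  rintro ⟨x, y, hxy⟩
  apply (frobeniusNumber_pair hco h1 h2).1
  rw [AddSubmonoid.mem_closure_pair]
  exact ⟨x, y, by rw [hxy, smul_eq_mul, smul_eq_mul, mul_comm x, mul_comm y]⟩
end
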